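/- arXiv:2207.09427 — 2 statements merged into one kernel-verified Lean document; each statement's English description precedes it below -/
import Mathlib

section
/- If H is a common graph (i.e., t(H,W) + t(H,1−W) ≥ 2^{1−e(H)} for every graphon W), then for every independent set I of H and every positive integer q, the q-book H_I^q is also common, i.e., t(H_I^q, W) + t(H_I^q, 1−W) ≥ 2^{1−e(H_I^q)} for every graphon W. -/
open MeasureTheory

abbrev unitI : Type := Set.Icc (0:ℝ) 1

structure Graphon where
  W : unitI → unitI → ℝ
  symm : ∀ x y, W x y = W y x
  measurable : Measurable fun p : unitI × unitI => W p.1 p.2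
  nonneg : ∀ x y, 0 ≤ W x y
  le_one : ∀ x y, W x y ≤ 1

def Graphon.compl (W : Graphon) : Graphon where
  W x y := 1 - W.W x y
  symm x y := by show 1 - W.W x y = 1 - W.W y x; rw [W.symm]
  measurable := measurable_const.sub W.measurable
  nonneg x y := by show 0 ≤ 1 - W.W x y; linarith [W.le_one x y]
  le_one x y := by show 1 - W.W x y ≤ 1; linarith [W.nonneg x y]

noncomputable def homDensity {V : Type} [Fintype V] (H : SimpleGraph V) (W : Graphon) : ℝ :=
  ∫ x : V → unitI,
    ∏ᶠ (e : Sym2 V) (_ : e ∈ H.edgeSet),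
      Sym2.lift ⟨fun u v => W.W (x u) (x v), fun u v => W.symm (x u) (x v)⟩ e

def IsCommon {V : Type} [Fintype V] (H : SimpleGraph V) : Prop :=
  ∀ W : Graphon,
    (2:ℝ) ^ (1 - (Nat.card H.edgeSet : ℤ)) ≤ homDensity H W + homDensity H W.compl

/-- Vertex set of the `q`-book of a graph on `V` along `I`. -/
abbrev BookVerts (V : Type) [DecidableEq V] (I : Finset V) (q : ℕ) : Type :=
  {v : V // v ∈ I} ⊕ (Fin q × {v : V // v ∉ I})

/-- The canonical embedding of the `j`-th page. -/
def bookEmb {V : Type} [DecidableEq V] (I : Finset V) (q : ℕ) (j : Fin q) (v : V) :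
    BookVerts V I q :=
  if h : v ∈ I then Sum.inl ⟨v, h⟩ else Sum.inr (j, ⟨v, h⟩)

lemma bookEmb_injective {V : Type} [DecidableEq V] (I : Finset V) (q : ℕ) (j : Fin q) :
    Function.Injective (bookEmb I q j) := by
  intro a b hab
  unfold bookEmb at hab
  split_ifs at hab with h1 h2 h2 <;> simp_all

/-- The `q`-book of `H` along `I`. -/
def book {V : Type} [DecidableEq V] (H : SimpleGraph V) (I : Finset V) (q : ℕ) :
    SimpleGraph (BookVerts V I q) where
  Adj a b := ∃ (j : Fin q) (u v : V), H.Adj u v ∧ a = bookEmb I q j u ∧ b = bookEmb I q j v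
  symm := ⟨by rintro a b ⟨j, u, v, h, ha, hb⟩; exact ⟨j, v, u, h.symm, hb, ha⟩⟩
  loopless := ⟨by
    rintro a ⟨j, u, v, h, ha, hb⟩
    exact (show H.Adj v v by rwa [bookEmb_injective I q j (ha.symm.trans hb ▸ rfl : bookEmb I q j u = bookEmb I q j v)] at h).ne rfl⟩

/-- `I` is an independent set of `H`. -/
def IndepIn {V : Type} (H : SimpleGraph V) (I : Finset V) : Prop :=
  ∀ u ∈ I, ∀ v ∈ I, ¬ H.Adj u v


/-!
Pin the vertices of the independent set `I` at `x ∈ [0,1]^I` and let `t_x(H, W)` be the density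
of `H` with those vertices fixed. The pages of the book `H_I^q` are copies of `H` that meet only
in `I`, and no edge of `H` lies inside `I`, so the pages are edge-disjoint and, once `x` is fixed,
involve disjoint sets of free vertices: `t(H_I^q, W) = ∫ t_x(H, W)^q dx`, while
`t(H, W) = ∫ t_x(H, W) dx`. Jensen's inequality and the convexity of `s ↦ s^q` then give
`t(H_I^q, W) + t(H_I^q, 1 - W) ≥ 2 ((t(H, W) + t(H, 1 - W)) / 2)^q ≥ 2 (2^{-e(H)})^q`.
-/

open SimpleGraph
open scoped Function

lemma MeasureTheory.measurePreserving_curry {ι κ X : Type*} [Fintype ι] [Fintype κ]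
    [MeasureSpace X] [IsProbabilityMeasure (volume : Measure X)] :
    MeasurePreserving (MeasurableEquiv.curry ι κ X) := by
  refine ⟨(MeasurableEquiv.curry ι κ X).measurable, ?_⟩
  simpa only [volume_pi, Measure.infinitePi_eq_pi] using
    Measure.infinitePi_map_curry fun (_ : ι) (_ : κ) => (volume : Measure X)

lemma MeasureTheory.integral_prod_curry_eq_pow {ι κ X : Type*} [Fintype ι] [Fintype κ]
    [MeasureSpace X] [IsProbabilityMeasure (volume : Measure X)] (G : (κ → X) → ℝ) :
    ∫ w : ι × κ → X, ∏ i, G (Function.curry w i) = (∫ z, G z) ^ Fintype.card ι := by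
  rw [← integral_fintype_prod_volume_eq_pow,
    ← (measurePreserving_curry (ι := ι) (κ := κ) (X := X)).integral_comp' fun u => ∏ i, G (u i)]
  rfl

lemma add_div_two_pow_le {a b : ℝ} (ha : 0 ≤ a) (hb : 0 ≤ b) (q : ℕ) :
    ((a + b) / 2) ^ q ≤ (a ^ q + b ^ q) / 2 :=
  calc ((a + b) / 2) ^ q = (1 / 2 * a + 1 / 2 * b) ^ q := by ring
    _ ≤ 1 / 2 * a ^ q + 1 / 2 * b ^ q := by
        simpa only [smul_eq_mul] using (convexOn_pow q).2 ha hb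
          (by norm_num : (0 : ℝ) ≤ 1 / 2) (by norm_num : (0 : ℝ) ≤ 1 / 2) (by norm_num)
    _ = (a ^ q + b ^ q) / 2 := by ring

lemma MeasureTheory.two_mul_mean_pow_le_integral_pow_add_integral_pow {α : Type*}
    [MeasurableSpace α] {μ : Measure α} [IsProbabilityMeasure μ] {f g : α → ℝ}
    (hf : Measurable f) (hg : Measurable g)
    (hf01 : ∀ x, f x ∈ Set.Icc (0 : ℝ) 1) (hg01 : ∀ x, g x ∈ Set.Icc (0 : ℝ) 1) (q : ℕ) :
    2 * ((∫ x, f x ∂μ + ∫ x, g x ∂μ) / 2) ^ q ≤ ∫ x, f x ^ q ∂μ + ∫ x, g x ^ q ∂μ := by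
  have integrable {h : α → ℝ} (hm : Measurable h) (h01 : ∀ x, h x ∈ Set.Icc (0 : ℝ) 1) :
      Integrable h μ :=
    Integrable.of_mem_Icc 0 1 hm.aemeasurable (ae_of_all _ h01)
  have pow01 {h : α → ℝ} (h01 : ∀ x, h x ∈ Set.Icc (0 : ℝ) 1) (x : α) :
      h x ^ q ∈ Set.Icc (0 : ℝ) 1 :=
    ⟨pow_nonneg (h01 x).1 q, pow_le_one₀ (h01 x).1 (h01 x).2⟩
  have mid01 (x : α) : (f x + g x) / 2 ∈ Set.Icc (0 : ℝ) 1 := by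
    obtain ⟨hf0, hf1⟩ := hf01 x
    obtain ⟨hg0, hg1⟩ := hg01 x
    constructor <;> linarith
  have hfi := integrable hf hf01
  have hgi := integrable hg hg01
  have hfq := integrable (hf.pow_const q) (pow01 hf01)
  have hgq := integrable (hg.pow_const q) (pow01 hg01)
  have hmid := integrable (((hf.add hg).div_const 2).pow_const q) (pow01 mid01)
  calc 2 * ((∫ x, f x ∂μ + ∫ x, g x ∂μ) / 2) ^ q
      = 2 * (∫ x, (f x + g x) / 2 ∂μ) ^ q := by rw [integral_div, integral_add hfi hgi]
    _ ≤ 2 * ∫ x, ((f x + g x) / 2) ^ q ∂μ := by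
        gcongr
        exact (convexOn_pow q).map_integral_le (continuous_pow q).continuousOn isClosed_Ici
          (ae_of_all _ fun x => (mid01 x).1) ((hfi.add hgi).div_const 2) hmid
    _ ≤ 2 * ∫ x, (f x ^ q + g x ^ q) / 2 ∂μ :=
        mul_le_mul_of_nonneg_left (integral_mono hmid ((hfq.add hgq).div_const 2)
          fun x => add_div_two_pow_le (hf01 x).1 (hg01 x).1 q) zero_le_two
    _ = ∫ x, f x ^ q ∂μ + ∫ x, g x ^ q ∂μ := by
        rw [integral_div, integral_add hfq hgq]
        ring

lemma two_zpow_one_sub_mul (q E : ℕ) :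
    (2 : ℝ) ^ (1 - ((q * E : ℕ) : ℤ)) = 2 * ((2 : ℝ) ^ (1 - (E : ℤ)) / 2) ^ q := by
  have half : (2 : ℝ) ^ (1 - (E : ℤ)) / 2 = 2 ^ (-(E : ℤ)) := by
    rw [zpow_sub₀ two_ne_zero, zpow_one, zpow_neg]
    ring
  rw [half, ← zpow_natCast, ← zpow_mul, mul_comm 2, ← zpow_add_one₀ two_ne_zero]
  congr 1
  push_cast
  ring

namespace SimpleGraph

lemma card_edgeSet_map {α β : Type*} (f : α ↪ β) (G : SimpleGraph α) :
    Nat.card (G.map f).edgeSet = Nat.card G.edgeSet := by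
  rw [edgeSet_map, Nat.card_image_of_injective f.sym2Map.injective]

lemma card_edgeSet_iSup {α ι : Type*} [Finite α] [Fintype ι] {G : ι → SimpleGraph α}
    (hG : Pairwise (Disjoint on G)) :
    Nat.card (⨆ i, G i).edgeSet = ∑ i, Nat.card (G i).edgeSet := by
  simp only [Nat.card_coe_set_eq]
  rw [edgeSet_iSup, Set.ncard_iUnion_of_finite (fun i => (G i).edgeSet.toFinite)
    (fun i j hij => disjoint_edgeSet.2 (hG hij)), finsum_eq_sum_of_fintype]

end SimpleGraph

namespace Graphon

variable {α β : Type*} (W : Graphon)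

noncomputable def edgeWeight (x : α → unitI) : Sym2 α → ℝ :=
  Sym2.lift ⟨fun u v => W.W (x u) (x v), fun u v => W.symm (x u) (x v)⟩

noncomputable def edgeProd (G : SimpleGraph α) (x : α → unitI) : ℝ :=
  ∏ᶠ e ∈ G.edgeSet, W.edgeWeight x e

lemma edgeWeight_mem_Icc (x : α → unitI) (e : Sym2 α) :
    W.edgeWeight x e ∈ Set.Icc (0 : ℝ) 1 := by
  induction e using Sym2.ind with | _ u v => exact ⟨W.nonneg _ _, W.le_one _ _⟩

lemma edgeWeight_sym2Map (f : α ↪ β) (y : β → unitI) (e : Sym2 α) :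
    W.edgeWeight y (f.sym2Map e) = W.edgeWeight (y ∘ f) e := by
  induction e using Sym2.ind with | _ u v => rfl

lemma measurable_edgeWeight (e : Sym2 α) :
    Measurable fun x : α → unitI => W.edgeWeight x e := by
  induction e using Sym2.ind with
  | _ u v => exact W.measurable.comp (f := fun x : α → unitI => (x u, x v)) (by fun_prop)

lemma edgeProd_eq_prod [Finite α] (G : SimpleGraph α) (x : α → unitI) :
    W.edgeProd G x = ∏ e ∈ G.edgeSet.toFinite.toFinset, W.edgeWeight x e :=
  finprod_mem_eq_finite_toFinset_prod _ _

lemma edgeProd_mem_Icc [Finite α] (G : SimpleGraph α) (x : α → unitI) :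
    W.edgeProd G x ∈ Set.Icc (0 : ℝ) 1 := by
  rw [edgeProd_eq_prod]
  exact ⟨Finset.prod_nonneg fun e _ => (W.edgeWeight_mem_Icc x e).1,
    Finset.prod_le_one (fun e _ => (W.edgeWeight_mem_Icc x e).1)
      fun e _ => (W.edgeWeight_mem_Icc x e).2⟩

@[fun_prop]
lemma measurable_edgeProd [Finite α] (G : SimpleGraph α) : Measurable (W.edgeProd G) := by
  simp_rw [funext (W.edgeProd_eq_prod G)]
  exact Finset.measurable_prod _ fun e _ => W.measurable_edgeWeight e

lemma edgeProd_map (f : α ↪ β) (G : SimpleGraph α) (y : β → unitI) :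
    W.edgeProd (G.map f) y = W.edgeProd G (y ∘ f) := by
  simp only [edgeProd, edgeSet_map, finprod_mem_image f.sym2Map.injective.injOn,
    edgeWeight_sym2Map]

lemma edgeProd_iSup [Finite α] {ι : Type*} [Fintype ι] {G : ι → SimpleGraph α}
    (hG : Pairwise (Disjoint on G)) (x : α → unitI) :
    W.edgeProd (⨆ i, G i) x = ∏ i, W.edgeProd (G i) x := by
  rw [edgeProd, edgeSet_iSup, finprod_mem_iUnion (fun i j hij => disjoint_edgeSet.2 (hG hij))
    fun i => (G i).edgeSet.toFinite, finprod_eq_prod_of_fintype]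
  rfl

lemma homDensity_eq_integral_edgeProd {V : Type} [Fintype V] (H : SimpleGraph V) :
    homDensity H W = ∫ x, W.edgeProd H x :=
  rfl

end Graphon

section Book

variable {V : Type} [DecidableEq V] {H : SimpleGraph V} {I : Finset V} {q : ℕ}

def bookEmbedding (I : Finset V) (q : ℕ) (j : Fin q) : V ↪ BookVerts V I q :=
  ⟨bookEmb I q j, bookEmb_injective I q j⟩

@[simp]
lemma bookEmbedding_apply (j : Fin q) (v : V) : bookEmbedding I q j v = bookEmb I q j v := rfl

lemma book_eq_iSup_map (H : SimpleGraph V) (I : Finset V) (q : ℕ) :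
    book H I q = ⨆ j, H.map (bookEmbedding I q j) := by
  ext a b
  simp only [book, iSup_adj, map_adj, bookEmbedding_apply, eq_comm (a := a), eq_comm (a := b)]

lemma eq_of_bookEmb_eq_of_notMem {j j' : Fin q} {u u' : V} (hu : u ∉ I)
    (h : bookEmb I q j u = bookEmb I q j' u') : j = j' := by
  unfold bookEmb at h
  split_ifs at h
  all_goals simp_all

lemma pairwise_disjoint_map_bookEmbedding (hI : IndepIn H I) :
    Pairwise (Disjoint on fun j => H.map (bookEmbedding I q j)) := by
  intro j j' hjj'
  rw [Function.onFun, disjoint_left]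
  intro a b hab hab'
  obtain ⟨u, v, huv, rfl, rfl⟩ := (map_adj _ _ _ _).1 hab
  obtain ⟨u', v', -, hu, hv⟩ := (map_adj _ _ _ _).1 hab'
  by_cases huI : u ∈ I
  · exact hjj' (eq_of_bookEmb_eq_of_notMem (fun hvI => hI u huI v hvI huv) hv.symm)
  · exact hjj' (eq_of_bookEmb_eq_of_notMem huI hu.symm)

lemma card_edgeSet_book [Finite V] (hI : IndepIn H I) :
    Nat.card (book H I q).edgeSet = q * Nat.card H.edgeSet := by
  rw [book_eq_iSup_map, card_edgeSet_iSup (pairwise_disjoint_map_bookEmbedding hI)]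
  simp only [card_edgeSet_map, Finset.sum_const, Finset.card_univ, Fintype.card_fin, smul_eq_mul]

lemma Graphon.edgeProd_book [Finite V] (hI : IndepIn H I) (W : Graphon)
    (y : BookVerts V I q → unitI) :
    W.edgeProd (book H I q) y = ∏ j, W.edgeProd H (y ∘ bookEmb I q j) := by
  rw [book_eq_iSup_map, W.edgeProd_iSup (pairwise_disjoint_map_bookEmbedding hI)]
  simp only [Graphon.edgeProd_map]
  rfl

abbrev splitAt (I : Finset V) :
    (V → unitI) ≃ᵐ ({v // v ∈ I} → unitI) × ({v // v ∉ I} → unitI) :=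
  MeasurableEquiv.piEquivPiSubtypeProd (fun _ => unitI) (· ∈ I)

lemma sumPiEquivProdPi_symm_comp_bookEmb
    (p : ({v // v ∈ I} → unitI) × (Fin q × {v // v ∉ I} → unitI)) (j : Fin q) :
    (MeasurableEquiv.sumPiEquivProdPi fun _ : BookVerts V I q => unitI).symm p ∘ bookEmb I q j
      = (splitAt I).symm (p.1, Function.curry p.2 j) := by
  funext v
  by_cases hv : v ∈ I <;>
    simp [bookEmb, hv, MeasurableEquiv.coe_sumPiEquivProdPi_symm]

end Book

section RootedDensity

variable {V : Type} [Fintype V] [DecidableEq V]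

noncomputable def rootedHomDensity (H : SimpleGraph V) (I : Finset V) (W : Graphon)
    (x : {v // v ∈ I} → unitI) : ℝ :=
  ∫ z, W.edgeProd H ((splitAt I).symm (x, z))

variable (H : SimpleGraph V) (I : Finset V) (W : Graphon)

lemma rootedHomDensity_mem_Icc (x : {v // v ∈ I} → unitI) :
    rootedHomDensity H I W x ∈ Set.Icc (0 : ℝ) 1 := by
  refine ⟨integral_nonneg fun z => (W.edgeProd_mem_Icc H _).1, ?_⟩
  refine (integral_mono_of_nonneg (ae_of_all _ fun z => (W.edgeProd_mem_Icc H _).1)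
    (integrable_const 1) (ae_of_all _ fun z => (W.edgeProd_mem_Icc H _).2)).trans_eq ?_
  simp

lemma measurable_rootedHomDensity : Measurable (rootedHomDensity H I W) := by
  have : Measurable fun p => W.edgeProd H ((splitAt I).symm p) := by fun_prop
  exact this.stronglyMeasurable.integral_prod_right'.measurable

lemma homDensity_eq_integral_rootedHomDensity :
    homDensity H W = ∫ x, rootedHomDensity H I W x := by
  rw [W.homDensity_eq_integral_edgeProd,
    ← (volume_preserving_piEquivPiSubtypeProd (fun _ => unitI) (· ∈ I)).symm.integral_comp',
    Measure.volume_eq_prod, integral_prod]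
  · -- the two sides carry different `Fintype` instances on `{v // v ∈ I}`
    congr!
  · exact Integrable.of_mem_Icc 0 1 (by fun_prop) (ae_of_all _ fun p => W.edgeProd_mem_Icc H _)

lemma homDensity_book {H : SimpleGraph V} {I : Finset V} (hI : IndepIn H I) (q : ℕ) :
    homDensity (book H I q) W = ∫ x, rootedHomDensity H I W x ^ q := by
  have hmeas : Measurable fun p : ({v // v ∈ I} → unitI) × (Fin q × {v // v ∉ I} → unitI) =>
      ∏ j, W.edgeProd H ((splitAt I).symm (p.1, Function.curry p.2 j)) := by
    fun_prop
  calc homDensity (book H I q) W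
      = ∫ y : BookVerts V I q → unitI, ∏ j, W.edgeProd H (y ∘ bookEmb I q j) :=
        integral_congr_ae (ae_of_all _ (W.edgeProd_book hI))
    _ = ∫ p : ({v // v ∈ I} → unitI) × (Fin q × {v // v ∉ I} → unitI),
          ∏ j, W.edgeProd H ((splitAt I).symm (p.1, Function.curry p.2 j)) := by
        rw [← (volume_measurePreserving_sumPiEquivProdPi_symm _).integral_comp']
        simp only [sumPiEquivProdPi_symm_comp_bookEmb]
    _ = ∫ x, rootedHomDensity H I W x ^ q := by
        rw [Measure.volume_eq_prod, integral_prod]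
        · refine integral_congr_ae (ae_of_all _ fun x => ?_)
          exact (integral_prod_curry_eq_pow fun z => W.edgeProd H ((splitAt I).symm (x, z))).trans
            (by rw [Fintype.card_fin]; rfl)
        · exact Integrable.of_mem_Icc 0 1 hmeas.aemeasurable (ae_of_all _ fun p =>
            ⟨Finset.prod_nonneg fun j _ => (W.edgeProd_mem_Icc H _).1,
              Finset.prod_le_one (fun j _ => (W.edgeProd_mem_Icc H _).1)
                fun j _ => (W.edgeProd_mem_Icc H _).2⟩)

end RootedDensity

theorem book_isCommon_general {V : Type} [Fintype V] [DecidableEq V]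
    (H : SimpleGraph V) (hH : IsCommon H) (I : Finset V) (hI : IndepIn H I)
    (q : ℕ) :
    IsCommon (book H I q) := by
  intro W
  have hcommon := hH W
  rw [homDensity_eq_integral_rootedHomDensity H I, homDensity_eq_integral_rootedHomDensity H I]
    at hcommon
  rw [card_edgeSet_book hI, homDensity_book W hI, homDensity_book W.compl hI,
    two_zpow_one_sub_mul]
  calc 2 * ((2 : ℝ) ^ (1 - (Nat.card H.edgeSet : ℤ)) / 2) ^ q
      ≤ 2 * (((∫ x, rootedHomDensity H I W x) + ∫ x, rootedHomDensity H I W.compl x) / 2) ^ q := by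
        gcongr
    _ ≤ _ := two_mul_mean_pow_le_integral_pow_add_integral_pow
        (measurable_rootedHomDensity H I W) (measurable_rootedHomDensity H I W.compl)
        (rootedHomDensity_mem_Icc H I W) (rootedHomDensity_mem_Icc H I W.compl) q

/-- if `H` is common, then so is every `q`-book of `H` along an
independent set. -/
theorem book_isCommon {V : Type} [Fintype V] [DecidableEq V]
    (H : SimpleGraph V) (hH : IsCommon H) (I : Finset V) (hI : IndepIn H I)
    (q : ℕ) (hq : 0 < q) :
    IsCommon (book H I q) :=
  book_isCommon_general H hH I hI q
end

section
/- Let H be a connected graph on r vertices and suppose P_1,...,P_k are k internally vertex-disjoint paths from u to v in the auxiliary hypergraph H_q^r of standard H-copies in the q-bookpile H(q). Then there exist k internally vertex-disjoint paths Q_1,...,Q_k from u to v in the graph H(q), where each Q_i uses only vertices and edges lying in the standard copies of H corresponding to the hyperedges of P_i. -/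
/-- A graph together with a labelling of its vertices by the vertices of an
original `r`-vertex graph, and, for each `e ∈ [q]^r`, the embedding of the
standard copy of the original graph indexed by `e`. -/
structure LGraph (q r : ℕ) where
  β : Type
  G : SimpleGraph β
  lab : β → Fin r
  copy : (Fin r → Fin q) → Fin r → β

/-- Vertex set after taking the `q`-book along all copies of the vertex `i`. -/
def StepVerts {q r : ℕ} (X : LGraph q r) (i : Fin r) : Type :=
  {b : X.β // X.lab b = i} ⊕ (Fin q × {b : X.β // X.lab b ≠ i})

/-- Embedding of the `j`-th page into the book along copies of `i`. -/
def stepEmb {q r : ℕ} (X : LGraph q r) (i : Fin r) (j : Fin q) (b : X.β) :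
    StepVerts X i :=
  if h : X.lab b = i then Sum.inl ⟨b, h⟩ else Sum.inr (j, ⟨b, h⟩)

lemma stepEmb_injective {q r : ℕ} (X : LGraph q r) (i : Fin r) (j : Fin q) :
    Function.Injective (stepEmb X i j) := by
  intro a b hab
  unfold stepEmb at hab
  by_cases h1 : X.lab a = i <;> by_cases h2 : X.lab b = i <;>
    simp [h1, h2] at hab <;>
    (injection hab with h
     first
     | exact congrArg Subtype.val h
     | exact congrArg Subtype.val (congrArg Prod.snd h))

/-- One step of the bookpile construction: the `q`-book along all copies
of the vertex `i`. -/
def pileStep {q r : ℕ} (X : LGraph q r) (i : Fin r) : LGraph q r where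
  β := StepVerts X i
  G := { Adj := fun a b => ∃ (j : Fin q) (u v : X.β),
            X.G.Adj u v ∧ a = stepEmb X i j u ∧ b = stepEmb X i j v
         symm := ⟨by rintro a b ⟨j, u, v, h, ha, hb⟩; exact ⟨j, v, u, h.symm, hb, ha⟩⟩
         loopless := ⟨by
           rintro a ⟨j, u, v, h, ha, hb⟩
           exact X.G.loopless.irrefl v
             (by rwa [stepEmb_injective X i j (ha.symm.trans hb)] at h)⟩ }
  lab := Sum.elim (fun b => X.lab b.1) (fun p => X.lab p.2.1)
  copy := fun e v => stepEmb X i (e i) (X.copy e v)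

/-- The `q`-bookpile `H(q)` of an `r`-vertex graph `H`: iterate the book
operation along the copies of each of the `r` vertices of `H`. -/
def bookpile {r : ℕ} (H : SimpleGraph (Fin r)) (q : ℕ) : LGraph q r :=
  (List.finRange r).foldl pileStep ⟨Fin r, H, id, fun _ v => v⟩

/-- A path in a (linear) hypergraph with incidence relation `Inc`, from `u` to
`v`: an alternating sequence of vertices and edges where consecutive
vertex-pairs lie in the corresponding edge and non-consecutive edges are
disjoint. -/
structure HPath {Vt Et : Type} (Inc : Vt → Et → Prop) (u v : Vt) where
  len : ℕ
  vert : Fin (len + 1) → Vt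
  edge : Fin len → Et
  first_eq : vert 0 = u
  last_eq : vert (Fin.last len) = v
  inc_left : ∀ i : Fin len, Inc (vert i.castSucc) (edge i)
  inc_right : ∀ i : Fin len, Inc (vert i.succ) (edge i)
  nonconsec_disjoint : ∀ i j : Fin len, (i : ℕ) + 1 < (j : ℕ) →
    ∀ w, Inc w (edge i) → Inc w (edge j) → False

/-- Two `u`–`v` paths are internally vertex-disjoint: their first edges share
only `u`, their last edges share only `v`, and all other pairs of edges are
disjoint. -/
def HPath.IntDisj {Vt Et : Type} {Inc : Vt → Et → Prop} {u v : Vt}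
    (P Q : HPath Inc u v) : Prop :=
  ∀ (i : Fin P.len) (j : Fin Q.len) (w : Vt),
    Inc w (P.edge i) → Inc w (Q.edge j) →
      ((i : ℕ) = 0 ∧ (j : ℕ) = 0 ∧ w = u) ∨
      ((i : ℕ) + 1 = P.len ∧ (j : ℕ) + 1 = Q.len ∧ w = v)

/-- Two paths are vertex-disjoint: every edge of one is disjoint from every
edge of the other. -/
def HPath.VDisj {Vt Et : Type} {Inc : Vt → Et → Prop} {u v u' v' : Vt}
    (P : HPath Inc u v) (Q : HPath Inc u' v') : Prop :=
  ∀ (i : Fin P.len) (j : Fin Q.len) (w : Vt),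
    Inc w (P.edge i) → Inc w (Q.edge j) → False

/-- Incidence relation of the auxiliary hypergraph of standard copies in the
`q`-bookpile: a vertex is incident to (the hyperedge indexed by) `e` iff it
lies in the standard copy indexed by `e`. -/
def pileIncid {r : ℕ} (H : SimpleGraph (Fin r)) (q : ℕ)
    (b : (bookpile H q).β) (e : Fin r → Fin q) : Prop :=
  b ∈ Set.range ((bookpile H q).copy e)

/-!
Each hyperedge `e` of the hypergraph path `P i` is a standard copy of `H`, which is connected, so
any two of its vertices are joined by a walk inside that copy. Concatenating these walks along
`P i` and shortcutting the result gives a path `Q i` in `H(q)` whose vertices all lie in hyperedges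
of `P i`. Since distinct hypergraph paths only meet in `u` (first hyperedges) or `v` (last
hyperedges), the paths `Q i` are internally vertex-disjoint.
-/

theorem SimpleGraph.Preconnected.exists_walk_map {V W : Type*} {H : SimpleGraph V}
    {G : SimpleGraph W} (hH : H.Preconnected) (f : H →g G) (a b : V) :
    ∃ p : G.Walk (f a) (f b), (∀ z ∈ p.support, z ∈ Set.range f) ∧
      ∀ d ∈ p.edges, ∃ x y, H.Adj x y ∧ d = s(f x, f y) := by
  obtain ⟨p⟩ := hH a b
  refine ⟨p.map f, ?_, ?_⟩
  · intro z hz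
    rw [SimpleGraph.Walk.support_map] at hz
    obtain ⟨c, -, rfl⟩ := List.mem_map.mp hz
    exact ⟨c, rfl⟩
  · intro d hd
    rw [SimpleGraph.Walk.edges_map] at hd
    obtain ⟨⟨x, y⟩, hxy, rfl⟩ := List.mem_map.mp hd
    exact ⟨x, y, p.adj_of_mem_edges hxy, rfl⟩

theorem pileStep_adj_copy {q r : ℕ} (X : LGraph q r) (i : Fin r) {e : Fin r → Fin q}
    {a b : Fin r} (h : X.G.Adj (X.copy e a) (X.copy e b)) :
    (pileStep X i).G.Adj ((pileStep X i).copy e a) ((pileStep X i).copy e b) :=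
  ⟨e i, _, _, h, rfl, rfl⟩

theorem foldl_pileStep_adj_copy {q r : ℕ} (l : List (Fin r)) (X : LGraph q r)
    {e : Fin r → Fin q} {a b : Fin r} (h : X.G.Adj (X.copy e a) (X.copy e b)) :
    (l.foldl pileStep X).G.Adj ((l.foldl pileStep X).copy e a)
      ((l.foldl pileStep X).copy e b) := by
  induction l generalizing X with
  | nil => exact h
  | cons i l ih => exact ih (pileStep X i) (pileStep_adj_copy X i h)

def bookpileCopyHom {r : ℕ} (H : SimpleGraph (Fin r)) (q : ℕ) (e : Fin r → Fin q) :
    H →g (bookpile H q).G where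
  toFun := (bookpile H q).copy e
  map_rel' h := foldl_pileStep_adj_copy _ _ h

section Chain

variable {V E : Type} {G : SimpleGraph V} {Inc : V → E → Prop} {R : E → Sym2 V → Prop}

theorem exists_walk_along_chain
    (hseg : ∀ e x y, Inc x e → Inc y e →
      ∃ p : G.Walk x y, (∀ z ∈ p.support, Inc z e) ∧ ∀ d ∈ p.edges, R e d) :
    ∀ (n : ℕ) (vert : Fin (n + 1) → V) (edge : Fin n → E),
      (∀ i, Inc (vert i.castSucc) (edge i)) → (∀ i, Inc (vert i.succ) (edge i)) →
      ∃ p : G.Walk (vert 0) (vert (Fin.last n)),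
        (∀ z ∈ p.support, z = vert 0 ∨ ∃ m, Inc z (edge m)) ∧
          ∀ d ∈ p.edges, ∃ m, R (edge m) d
  | 0, _, _, _, _ => ⟨.nil, by simp, by simp⟩
  | n + 1, vert, edge, hl, hr => by
    obtain ⟨s, hs_supp, hs_edges⟩ := hseg (edge 0) _ _ (hl 0) (hr 0)
    obtain ⟨t, ht_supp, ht_edges⟩ := exists_walk_along_chain hseg n (vert ∘ Fin.succ)
      (edge ∘ Fin.succ) (fun i => hl i.succ) (fun i => hr i.succ)
    refine ⟨s.append t, fun z hz => ?_, fun d hd => ?_⟩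
    · rcases (s.mem_support_append_iff t).mp hz with hz | hz
      · exact .inr ⟨0, hs_supp z hz⟩
      · rcases ht_supp z hz with rfl | ⟨m, hm⟩
        exacts [.inr ⟨0, hr 0⟩, .inr ⟨m.succ, hm⟩]
    · rcases List.mem_append.mp ((s.edges_append t) ▸ hd) with hd | hd
      · exact ⟨0, hs_edges d hd⟩
      · obtain ⟨m, hm⟩ := ht_edges d hd
        exact ⟨m.succ, hm⟩

theorem HPath.len_pos {u v : V} (P : HPath Inc u v) (huv : u ≠ v) : 0 < P.len := by
  refine Nat.pos_of_ne_zero fun h => huv ?_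
  have hlast : Fin.last P.len = 0 := Fin.ext h
  exact P.first_eq.symm.trans ((congrArg P.vert hlast.symm).trans P.last_eq)

theorem HPath.exists_isPath [DecidableEq V] {u v : V} (P : HPath Inc u v) (huv : u ≠ v)
    (hseg : ∀ e x y, Inc x e → Inc y e →
      ∃ p : G.Walk x y, (∀ z ∈ p.support, Inc z e) ∧ ∀ d ∈ p.edges, R e d) :
    ∃ p : G.Walk u v, p.IsPath ∧ (∀ z ∈ p.support, ∃ m, Inc z (P.edge m)) ∧
      ∀ d ∈ p.edges, ∃ m, R (P.edge m) d := by
  obtain ⟨p, hp_supp, hp_edges⟩ :=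
    exists_walk_along_chain hseg P.len P.vert P.edge P.inc_left P.inc_right
  let w : G.Walk u v := p.copy P.first_eq P.last_eq
  refine ⟨w.bypass, w.bypass_isPath, fun z hz => ?_, fun d hd => ?_⟩
  · have hz' : z ∈ p.support := by simpa [w] using w.support_bypass_subset_support hz
    rcases hp_supp z hz' with rfl | hm
    exacts [⟨_, P.inc_left ⟨0, P.len_pos huv⟩⟩, hm]
  · exact hp_edges d (by simpa [w] using w.edges_bypass_subset_edges hd)

end Chain

/-- internally vertex-disjoint paths in the auxiliary hypergraph
of standard copies yield internally vertex-disjoint paths in the bookpile graph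
itself, each using only vertices and edges of the standard copies corresponding
to the hyperedges of the original path. -/
theorem hyp_paths_to_graph_paths {r : ℕ} (H : SimpleGraph (Fin r)) (hconn : H.Connected)
    (q k : ℕ) (u v : (bookpile H q).β) (huv : u ≠ v)
    (P : Fin k → HPath (pileIncid H q) u v)
    (hP : ∀ i j, i ≠ j → (P i).IntDisj (P j)) :
    ∃ Q : Fin k → (bookpile H q).G.Walk u v,
      (∀ i, (Q i).IsPath) ∧
      (∀ i j, i ≠ j → ∀ x, x ∈ (Q i).support → x ∈ (Q j).support →
        x = u ∨ x = v) ∧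
      (∀ i, ∀ x ∈ (Q i).support, ∃ m : Fin (P i).len, pileIncid H q x ((P i).edge m)) ∧
      (∀ i, ∀ ed ∈ (Q i).edges, ∃ (m : Fin (P i).len) (a b : Fin r),
        H.Adj a b ∧
          ed = s((bookpile H q).copy ((P i).edge m) a,
                 (bookpile H q).copy ((P i).edge m) b)) := by
  classical
  have hseg : ∀ e x y, pileIncid H q x e → pileIncid H q y e →
      ∃ p : (bookpile H q).G.Walk x y, (∀ z ∈ p.support, pileIncid H q z e) ∧
        ∀ d ∈ p.edges, ∃ a b, H.Adj a b ∧
          d = s((bookpile H q).copy e a, (bookpile H q).copy e b) := by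
    rintro e _ _ ⟨a, rfl⟩ ⟨b, rfl⟩
    exact hconn.preconnected.exists_walk_map (bookpileCopyHom H q e) a b
  choose Q hQ_path hQ_supp hQ_edges using fun i => (P i).exists_isPath huv hseg
  refine ⟨Q, hQ_path, fun i j hij x hxi hxj => ?_, hQ_supp, hQ_edges⟩
  obtain ⟨m, hm⟩ := hQ_supp i x hxi
  obtain ⟨n, hn⟩ := hQ_supp j x hxj
  rcases hP i j hij m n x hm hn with ⟨-, -, rfl⟩ | ⟨-, -, rfl⟩
  exacts [.inl rfl, .inr rfl]
end
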